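/- Let w ∈ (0,1), α > 0, and ρ ≤ 0. Define r₁ := 12(w³−w²−w+1), r₂ := 4(w³+3w²+2w), r₃ := 4(−4w³+w+3), p₁ := −4w³−2w²−2, p₂ := 8w³−4w²−4, p₃ := −4w³+6w²−2, q₁ := 2w³−w²+w, q₂ := −4w³+4w²−w+1, q₃ := 2w³−3w²+1, and set C₁ := 4·[ −6((w+1)α² + (1−w)α)·ρ + 3wα² − 3(w−1)α ] / (r₂α² + r₃α + r₁) and C₂ := [ (p₁α² + p₂α + p₃)·ρ + q₁α² + q₂α + q₃ ] / (2(r₂α² + r₃α + r₁)). Then r₁, r₂, r₃, q₁, q₂, q₃ are all positive and p₁, p₂, p₃ are all negative for every w ∈ (0,1), and consequently C₁ > 0 and C₂ > 0. -/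
import Mathlib


noncomputable def r1 (w : ℝ) : ℝ := 12*(w^3-w^2-w+1)
noncomputable def r2 (w : ℝ) : ℝ := 4*(w^3+3*w^2+2*w)
noncomputable def r3 (w : ℝ) : ℝ := 4*(-4*w^3+w+3)
noncomputable def p1 (w : ℝ) : ℝ := -4*w^3-2*w^2-2
noncomputable def p2 (w : ℝ) : ℝ := 8*w^3-4*w^2-4
noncomputable def p3 (w : ℝ) : ℝ := -4*w^3+6*w^2-2
noncomputable def q1 (w : ℝ) : ℝ := 2*w^3-w^2+w
noncomputable def q2 (w : ℝ) : ℝ := -4*w^3+4*w^2-w+1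
noncomputable def q3 (w : ℝ) : ℝ := 2*w^3-3*w^2+1

/-- the coefficient of `h⁻¹` in the discrete operator applied to the comparison function. -/
noncomputable def C1 (α w ρ : ℝ) : ℝ :=
  4 * (-6 * ((w + 1) * α^2 + (1 - w) * α) * ρ + 3 * w * α^2 - 3 * (w - 1) * α) /
    (r2 w * α^2 + r3 w * α + r1 w)

/-- the coefficient of `h` in the discrete operator applied to the comparison function. -/
noncomputable def C2 (α w ρ : ℝ) : ℝ :=
  ((p1 w * α^2 + p2 w * α + p3 w) * ρ + q1 w * α^2 + q2 w * α + q3 w) /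
    (2 * (r2 w * α^2 + r3 w * α + r1 w))

theorem stmt16 (w α ρ : ℝ) (hw : w ∈ Set.Ioo (0 : ℝ) 1) (hα : 0 < α) (hρ : ρ ≤ 0) :
    (0 < r1 w ∧ 0 < r2 w ∧ 0 < r3 w ∧ 0 < q1 w ∧ 0 < q2 w ∧ 0 < q3 w) ∧
    (p1 w < 0 ∧ p2 w < 0 ∧ p3 w < 0) ∧
    0 < C1 α w ρ ∧ 0 < C2 α w ρ := by

  obtain ⟨hw0, hw1⟩ := hw
  have hr1 : 0 < r1 w := by unfold r1; nlinarith [sq_nonneg (w-1), sq_nonneg w]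
  have hr2 : 0 < r2 w := by unfold r2; nlinarith [sq_nonneg w]
  have hr3 : 0 < r3 w := by unfold r3; nlinarith [sq_nonneg w, sq_nonneg (w+1), mul_pos hw0 hw0]
  have hq1 : 0 < q1 w := by unfold q1; nlinarith [sq_nonneg (w-1), mul_pos hw0 hw0]
  have hq2 : 0 < q2 w := by unfold q2; nlinarith [sq_nonneg w, mul_pos (mul_pos hw0 hw0) (sub_pos.mpr hw1)]
  have hq3 : 0 < q3 w := by unfold q3; nlinarith [mul_pos (mul_pos (sub_pos.mpr hw1) (sub_pos.mpr hw1)) hw0, sq_nonneg (w-1)]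
  have hp1 : p1 w < 0 := by unfold p1; nlinarith [sq_nonneg w]
  have hp2 : p2 w < 0 := by unfold p2; nlinarith [sq_nonneg w, mul_pos hw0 hw0]
  have hp3 : p3 w < 0 := by unfold p3; nlinarith [mul_pos (mul_pos (sub_pos.mpr hw1) (sub_pos.mpr hw1)) hw0, sq_nonneg (w-1)]
  have hα2 : 0 < α^2 := by positivity
  have hD : 0 < r2 w * α^2 + r3 w * α + r1 w := by
    have := mul_pos hr2 hα2
    have := mul_pos hr3 hα
    linarith
  refine ⟨⟨hr1, hr2, hr3, hq1, hq2, hq3⟩, ⟨hp1, hp2, hp3⟩, ?_, ?_⟩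
  · unfold C1
    apply div_pos _ hD
    have h1 : 0 < 3 * w * α^2 - 3 * (w - 1) * α := by nlinarith
    have h2 : 0 ≤ -6 * ((w + 1) * α^2 + (1 - w) * α) * ρ := by
      have : 0 < (w + 1) * α^2 + (1 - w) * α := by nlinarith
      nlinarith
    linarith
  · unfold C2
    apply div_pos _ (by linarith)
    have h2 : 0 ≤ (p1 w * α^2 + p2 w * α + p3 w) * ρ := by
      have : p1 w * α^2 + p2 w * α + p3 w < 0 := by nlinarith [mul_pos hα hα2]
      nlinarith
    nlinarith [mul_pos hq1 hα2, mul_pos hq2 hα]
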